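/- arXiv:2406.05523 — 3 statements merged into one kernel-verified Lean document; each statement's English description precedes it below -/
import Mathlib

section
/- Let R > 1, let 0 < ε < 1/4, and let y : ℝ → (0,1] be measurable. Then ∫₀¹ #{ coprime pairs (c,d) ∈ ℤ² with c ≥ 1, together with (c,d) = (0,1), such that y_{c,d}(x + i·y(x))^{1/4} > R · y(x)^{−ε} } dx ≤ 2 · (ζ(2/(1−4ε) − 1)/ζ(2/(1−4ε))) · R^{−4}, where ζ denotes the Riemann zeta function (note 2/(1−4ε) > 2, so both zeta values are finite and positive). -/
open MeasureTheory Filter Topology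
open scoped ENNReal

/-- `y_{c,d}(x + iy) = y / ((cx+d)² + c²y²)`, the imaginary part of `γ(x+iy)` for
`γ ∈ SL(2,ℤ)` with bottom row `(c,d)`. -/
noncomputable def ycd (c d : ℤ) (x Y : ℝ) : ℝ :=
  Y / (((c : ℝ) * x + (d : ℝ)) ^ 2 + (c : ℝ) ^ 2 * Y ^ 2)

/-- The parametrization of `Γ_∞\PSL(2,ℤ)`: coprime pairs `(c,d)` with `c ≥ 1`,
together with `(c,d) = (0,1)`. -/
def cuspIdx (q : ℤ × ℤ) : Prop := (1 ≤ q.1 ∧ IsCoprime q.1 q.2) ∨ q = (0, 1)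

/-!
If `(c, d)` with `c ≥ 1` is counted at `x`, then, writing `y = y(x)`,
`R⁴ ((c x + d)² + c² y²) < y^{1 + 4ε}`. The term `c² y²` forces `y^{1 - 4ε} < (c R²)⁻²`, and
since `y^{1 + 4ε} = (y^{1 - 4ε})^{s - 1}` for `s = 2 / (1 - 4ε)`, the term `(c x + d)²` then
forces `|c x + d| < δ_c := c^{1 - s} R^{-2s} ≤ 1`; the pair `(0, 1)` is never counted because
`y ≤ 1 < R`. For fixed `c`, the `x ∈ (0, 1)` with `0 ≤ c x + d < δ_c` (resp. `-δ_c < c x + d < 0`)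
form a set of measure at most `δ_c / c`, empty unless `d` lies in a window of `c` consecutive
integers, `φ(c)` of which are coprime to `c`. So the integral is at most
`∑_c 2 φ(c) δ_c / c = 2 R^{-2s} ζ(s - 1) / ζ(s) ≤ 2 R^{-4} ζ(s - 1) / ζ(s)`.
-/

open Finset Real

theorem lintegral_ncard_le_tsum_measure {α ι : Type*} [MeasurableSpace α] [Countable ι]
    (μ : Measure α) {A : ι → Set α} (hA : ∀ i, MeasurableSet (A i)) :
    ∫⁻ x, ({i | x ∈ A i}.ncard : ℝ≥0∞) ∂μ ≤ ∑' i, μ (A i) := by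
  calc ∫⁻ x, ({i | x ∈ A i}.ncard : ℝ≥0∞) ∂μ
      ≤ ∫⁻ x, ∑' i, (A i).indicator 1 x ∂μ := by
        refine lintegral_mono fun x => ?_
        rw [← ENat.toENNReal_coe]
        calc _ ≤ ({i | x ∈ A i}.encard : ℝ≥0∞) :=
              ENat.toENNReal_le.2 (ENat.natCast_toNat_le_self _)
          _ = _ := by
              rw [← ENNReal.tsum_set_one, _root_.tsum_subtype {i | x ∈ A i} (fun _ => 1)]
              rfl
    _ = ∑' i, μ (A i) := by
        rw [lintegral_tsum fun i => (measurable_one.indicator (hA i)).aemeasurable]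
        simp [lintegral_indicator_one (hA _)]

theorem tsum_int_toNat {M : Type*} [AddCommMonoid M] [TopologicalSpace M] {f : ℕ → M}
    (hf : f 0 = 0) : ∑' c : ℤ, f c.toNat = ∑' n, f n := by
  refine (Nat.cast_injective.tsum_eq fun c hc => ⟨c.toNat, ?_⟩).symm.trans (by simp)
  have : c.toNat ≠ 0 := fun h => hc (by simp [h, hf])
  omega

theorem Real.volume_preimage_mul_add {a : ℝ} (ha : 0 < a) (b : ℝ) (s : Set ℝ) :
    volume ((fun x => a * x + b) ⁻¹' s) = ENNReal.ofReal a⁻¹ * volume s := by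
  rw [show (fun x => a * x + b) = (· + b) ∘ (a * ·) from rfl, Set.preimage_comp,
    Real.volume_preimage_mul_left ha.ne', measure_preimage_add_right, abs_of_pos (inv_pos.2 ha)]

theorem card_filter_isCoprime_Ioc (c n : ℕ) :
    #{d ∈ Ioc (-(n + c : ℤ)) (-n) | IsCoprime (c : ℤ) d} = c.totient := by
  rw [← Nat.filter_coprime_Ico_eq_totient c n]
  symm
  refine card_nbij' (fun m => -(m : ℤ)) (fun d => (-d).toNat) ?_ ?_ ?_ ?_
  · intro m hm
    simp only [coe_filter, mem_Ico, mem_Ioc, Set.mem_ofPred_eq, IsCoprime.neg_right_iff,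
      Nat.isCoprime_iff_coprime] at hm ⊢
    omega
  · intro d hd
    simp only [coe_filter, mem_Ico, mem_Ioc, Set.mem_ofPred_eq] at hd ⊢
    refine ⟨by omega, ?_⟩
    rw [← Nat.isCoprime_iff_coprime, Int.toNat_of_nonneg (by omega), IsCoprime.neg_right_iff]
    exact hd.2
  · intro m _
    simp
  · intro d hd
    simp only [coe_filter, mem_Ioc, Set.mem_ofPred_eq] at hd
    simp only
    omega

section CoprimeWindows

variable {c : ℕ} {δ x : ℝ} {d : ℤ}

theorem tsum_volume_coprime_mem_le (hc : 0 < c) (n : ℕ) {J : Set ℝ}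
    (hJ : ∀ (d : ℤ), ∀ x ∈ Set.Ioo (0 : ℝ) 1, c * x + d ∈ J → d ∈ Ioc (-(n + c : ℤ)) (-n)) :
    ∑' d : ℤ, volume {x ∈ Set.Ioo (0 : ℝ) 1 | IsCoprime (c : ℤ) d ∧ c * x + d ∈ J}
      ≤ c.totient * (ENNReal.ofReal (c : ℝ)⁻¹ * volume J) := by
  rw [tsum_eq_sum (s := {d ∈ Ioc (-(n + c : ℤ)) (-n) | IsCoprime (c : ℤ) d})]
  · calc _ ≤ ∑ d ∈ {d ∈ Ioc (-(n + c : ℤ)) (-n) | IsCoprime (c : ℤ) d},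
            ENNReal.ofReal (c : ℝ)⁻¹ * volume J := by
          refine sum_le_sum fun d _ => ?_
          rw [← Real.volume_preimage_mul_add (Nat.cast_pos.2 hc) d]
          exact measure_mono fun x hx => hx.2.2
      _ = _ := by rw [sum_const, card_filter_isCoprime_Ioc, nsmul_eq_mul]
  · intro d hd
    convert measure_empty (μ := volume)
    refine Set.eq_empty_of_forall_notMem fun x ⟨hx, hcop, hxJ⟩ => hd ?_
    exact mem_filter.2 ⟨hJ d x hx hxJ, hcop⟩

theorem mem_Ioc_of_mul_add_mem_Ico (hc : 0 < c) (hδ : δ ≤ 1) (hx : x ∈ Set.Ioo 0 1)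
    (h : c * x + d ∈ Set.Ico 0 δ) : d ∈ Ioc (-(c : ℤ)) 0 := by
  have hc' : (0 : ℝ) < c := Nat.cast_pos.2 hc
  have h₁ : (d : ℝ) < 1 := by nlinarith [hx.1, h.2]
  have h₂ : -(c : ℝ) < d := by nlinarith [hx.2, h.1]
  exact mem_Ioc.2 ⟨by exact_mod_cast h₂, Int.lt_add_one_iff.1 (by exact_mod_cast h₁)⟩

theorem mem_Ioc_of_mul_add_mem_Ioo (hc : 0 < c) (hδ : δ ≤ 1) (hx : x ∈ Set.Ioo 0 1)
    (h : c * x + d ∈ Set.Ioo (-δ) 0) : d ∈ Ioc (-(1 + c : ℤ)) (-1) := by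
  have hc' : (0 : ℝ) < c := Nat.cast_pos.2 hc
  have h₁ : (d : ℝ) < 0 := by nlinarith [hx.1, h.2]
  have h₂ : -(1 + c : ℝ) < d := by nlinarith [hx.2, h.1]
  have : d < 0 ∧ -(1 + c : ℤ) < d := ⟨by exact_mod_cast h₁, by exact_mod_cast h₂⟩
  rw [mem_Ioc]
  omega

theorem tsum_volume_coprime_abs_mul_add_lt_le (hc : 0 < c) (hδ : δ ≤ 1) :
    ∑' d : ℤ, volume {x ∈ Set.Ioo (0 : ℝ) 1 | IsCoprime (c : ℤ) d ∧ |c * x + d| < δ}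
      ≤ ENNReal.ofReal (2 * c.totient * δ / c) := by
  have hsplit : ∀ d : ℤ,
      {x ∈ Set.Ioo (0 : ℝ) 1 | IsCoprime (c : ℤ) d ∧ |c * x + d| < δ}
        ⊆ {x ∈ Set.Ioo (0 : ℝ) 1 | IsCoprime (c : ℤ) d ∧ c * x + d ∈ Set.Ico 0 δ}
          ∪ {x ∈ Set.Ioo (0 : ℝ) 1 | IsCoprime (c : ℤ) d ∧ c * x + d ∈ Set.Ioo (-δ) 0} := by
    rintro d x ⟨hx, hcop, hlt⟩
    rw [abs_lt] at hlt
    rcases le_or_gt 0 ((c : ℝ) * x + d) with h | h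
    · exact Or.inl ⟨hx, hcop, h, hlt.2⟩
    · exact Or.inr ⟨hx, hcop, hlt.1, h⟩
  calc _ ≤ ∑' d : ℤ,
        (volume {x ∈ Set.Ioo (0 : ℝ) 1 | IsCoprime (c : ℤ) d ∧ c * x + d ∈ Set.Ico 0 δ}
          + volume {x ∈ Set.Ioo (0 : ℝ) 1 | IsCoprime (c : ℤ) d ∧ c * x + d ∈ Set.Ioo (-δ) 0}) :=
        ENNReal.tsum_le_tsum fun d => (measure_mono (hsplit d)).trans (measure_union_le _ _)
    _ ≤ c.totient * (ENNReal.ofReal (c : ℝ)⁻¹ * volume (Set.Ico 0 δ))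
          + c.totient * (ENNReal.ofReal (c : ℝ)⁻¹ * volume (Set.Ioo (-δ) 0)) := by
        rw [ENNReal.tsum_add]
        exact add_le_add
          (tsum_volume_coprime_mem_le hc 0 fun d x hx h => by
            simpa using mem_Ioc_of_mul_add_mem_Ico hc hδ hx h)
          (tsum_volume_coprime_mem_le hc 1 fun d x hx h => by
            simpa using mem_Ioc_of_mul_add_mem_Ioo hc hδ hx h)
    _ = ENNReal.ofReal (2 * c.totient * δ / c) := by
        rw [Real.volume_Ico, Real.volume_Ioo, sub_zero, zero_sub, neg_neg, ← two_mul,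
          ← ENNReal.ofReal_natCast, ← ENNReal.ofReal_mul (by positivity),
          ← ENNReal.ofReal_mul (by positivity), ← ENNReal.ofReal_ofNat 2,
          ← ENNReal.ofReal_mul (by positivity)]
        congr 1
        ring

end CoprimeWindows

open LSeries Complex in
theorem term_natCast_eq_term_one (s : ℂ) : term (fun n => (n : ℂ)) s = term 1 (s - 1) := by
  ext n
  rcases eq_or_ne n 0 with rfl | hn
  · simp
  · rw [term_of_ne_zero hn, term_of_ne_zero hn, Pi.one_apply,
      cpow_sub _ _ (Nat.cast_ne_zero.2 hn), cpow_one, one_div_div]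

open LSeries in
open scoped LSeries.notation in
theorem one_convolution_totient :
    (1 : ℕ → ℂ) ⍟ (fun n => (n.totient : ℂ)) = fun n : ℕ => (n : ℂ) := by
  ext n
  simp only [LSeries.convolution_def, Pi.one_apply, one_mul]
  rw [Nat.sum_divisorsAntidiagonal' (f := fun _ d => (d.totient : ℂ))]
  exact_mod_cast Nat.sum_totient n

theorem LSeriesSummable_totient {s : ℂ} (hs : 2 < s.re) :
    LSeriesSummable (fun n => (n.totient : ℂ)) s :=
  LSeriesSummable_of_le_const_mul_rpow hs ⟨1, fun n _ => by
    norm_num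
    exact_mod_cast Nat.totient_le n⟩

theorem LSeries_totient {s : ℂ} (hs : 2 < s.re) :
    LSeries (fun n => (n.totient : ℂ)) s = riemannZeta (s - 1) / riemannZeta s := by
  have hs₁ : 1 < s.re := by linarith
  have hs₂ : 1 < (s - 1).re := by simp; linarith
  have h := LSeries_convolution' (LSeriesSummable_one_iff.2 hs₁) (LSeriesSummable_totient hs)
  rw [one_convolution_totient, LSeries, term_natCast_eq_term_one, ← LSeries,
    LSeries_one_eq_riemannZeta hs₂, LSeries_one_eq_riemannZeta hs₁] at h
  rw [h, mul_div_cancel_left₀ _ (riemannZeta_ne_zero_of_one_lt_re hs₁)]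

theorem hasSum_totient_div_rpow {s : ℝ} (hs : 2 < s) :
    HasSum (fun n : ℕ => (n.totient : ℝ) / (n : ℝ) ^ s)
      (riemannZeta (s - 1) / riemannZeta s).re := by
  have h := (LSeriesSummable_totient (s := s) (by simpa using hs)).LSeriesHasSum
  rw [LSeries_totient (by simpa using hs)] at h
  convert Complex.hasSum_re h with n
  rcases eq_or_ne n 0 with rfl | hn
  · simp
  · rw [LSeries.term_of_ne_zero hn, ← Complex.ofReal_natCast n,
      ← Complex.ofReal_cpow (Nat.cast_nonneg n), ← Complex.ofReal_natCast,
      ← Complex.ofReal_div, Complex.ofReal_re]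

theorem abs_lt_of_mul_add_rpow_lt {s w c R u : ℝ} (hs : 1 < s) (hw : 0 < w) (hc : 0 < c)
    (hR : 0 < R) (h : R ^ 4 * (u ^ 2 + c ^ 2 * w ^ s) < w ^ (s - 1)) :
    |u| < c ^ (1 - s) * R ^ (-(2 * s)) := by
  set K := R ^ 2 * c with hK
  have hK0 : 0 < K := by positivity
  have hws : w ^ s = w ^ (s - 1) * w := by rw [← rpow_add_one hw.ne', sub_add_cancel]
  have hKw : w < (K ^ 2)⁻¹ := by
    have : K ^ 2 * w * w ^ (s - 1) < 1 * w ^ (s - 1) := by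
      calc K ^ 2 * w * w ^ (s - 1) = R ^ 4 * (c ^ 2 * w ^ s) := by rw [hws, hK]; ring
        _ ≤ R ^ 4 * (u ^ 2 + c ^ 2 * w ^ s) := by
          gcongr; exact le_add_of_nonneg_left (sq_nonneg u)
        _ < 1 * w ^ (s - 1) := by rwa [one_mul]
    rw [← one_div, lt_div_iff₀ (by positivity), mul_comm]
    exact lt_of_mul_lt_mul_right this (rpow_nonneg hw.le _)
  have hsq : (u * R ^ 2) ^ 2 < (K ^ (1 - s)) ^ 2 := by
    calc (u * R ^ 2) ^ 2 ≤ R ^ 4 * (u ^ 2 + c ^ 2 * w ^ s) := by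
          nlinarith [rpow_pos_of_pos hw s]
      _ < w ^ (s - 1) := h
      _ < ((K ^ 2)⁻¹) ^ (s - 1) := by gcongr
      _ = (K ^ (1 - s)) ^ 2 := by
        rw [inv_rpow (by positivity), ← rpow_natCast K 2, ← rpow_mul hK0.le, ← rpow_neg hK0.le,
          ← rpow_natCast (K ^ (1 - s)) 2, ← rpow_mul hK0.le]
        ring_nf
  have habs : |u| * R ^ 2 < K ^ (1 - s) := by
    simpa [abs_mul] using abs_lt_of_sq_lt_sq hsq (by positivity)
  calc |u| = |u| * R ^ 2 / R ^ 2 := by field_simp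
    _ < K ^ (1 - s) / R ^ 2 := by gcongr
    _ = c ^ (1 - s) * R ^ (-(2 * s)) := by
      rw [hK, mul_rpow (by positivity) hc.le, ← rpow_natCast R 2, ← rpow_mul hR.le,
        div_eq_mul_inv, ← rpow_neg hR.le, mul_right_comm, ← rpow_add hR]
      ring_nf

theorem pow_four_mul_lt_of_lt_ycd_rpow {R ε x Y : ℝ} {c d : ℤ} (hR : 0 < R) (hY : 0 < Y)
    (h : R * Y ^ (-ε) < ycd c d x Y ^ ((1 : ℝ) / 4)) :
    R ^ 4 * ((c * x + d) ^ 2 + c ^ 2 * Y ^ 2) < Y ^ (1 + 4 * ε) := by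
  set Q := ((c : ℝ) * x + d) ^ 2 + (c : ℝ) ^ 2 * Y ^ 2
  have hycd : 0 < ycd c d x Y := by
    refine lt_of_le_of_ne (div_nonneg hY.le (by positivity)) fun h0 => ?_
    rw [← h0, zero_rpow (by norm_num)] at h
    exact (mul_pos hR (rpow_pos_of_pos hY _)).not_gt h
  have hQ : 0 < Q := (div_pos_iff_of_pos_left hY).1 hycd
  have h4 : R ^ 4 * Y ^ (-(4 * ε)) < Y / Q := by
    calc R ^ 4 * Y ^ (-(4 * ε)) = (R * Y ^ (-ε)) ^ 4 := by
          rw [mul_pow, ← rpow_natCast (Y ^ (-ε)), ← rpow_mul hY.le]; ring_nf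
      _ < (ycd c d x Y ^ ((1 : ℝ) / 4)) ^ 4 := by gcongr
      _ = Y / Q := by rw [← rpow_natCast, ← rpow_mul hycd.le]; norm_num [ycd, Q]
  have hYY : Y ^ (-(4 * ε)) * Y ^ (1 + 4 * ε) = Y := by
    rw [← rpow_add hY]; norm_num
  rw [lt_div_iff₀ hQ] at h4
  nlinarith [hYY, rpow_pos_of_pos hY (1 + 4 * ε)]

theorem abs_mul_add_lt_of_lt_ycd_rpow {R ε s x Y : ℝ} {c d : ℤ} (hc : 0 < c) (hR : 0 < R)
    (hY : 0 < Y) (hs : 1 < s) (hεs : (1 - 4 * ε) * s = 2)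
    (h : R * Y ^ (-ε) < ycd c d x Y ^ ((1 : ℝ) / 4)) :
    |c * x + d| < (c : ℝ) ^ (1 - s) * R ^ (-(2 * s)) := by
  refine abs_lt_of_mul_add_rpow_lt hs (rpow_pos_of_pos hY (1 - 4 * ε)) (Int.cast_pos.2 hc) hR ?_
  rw [← rpow_mul hY.le, ← rpow_mul hY.le, mul_sub, hεs, rpow_two]
  convert pow_four_mul_lt_of_lt_ycd_rpow hR hY h using 2
  ring_nf

def largeHeightSet (R ε : ℝ) (y : ℝ → ℝ) (q : ℤ × ℤ) : Set ℝ :=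
  {x | cuspIdx q ∧ R * y x ^ (-ε) < ycd q.1 q.2 x (y x) ^ ((1 : ℝ) / 4)}

section LargeHeightSet

variable {R ε : ℝ} {y : ℝ → ℝ}

theorem measurableSet_largeHeightSet (hy : Measurable y) (q : ℤ × ℤ) :
    MeasurableSet (largeHeightSet R ε y q) := by
  have hf : Measurable fun x => R * y x ^ (-ε) := by fun_prop
  have hg : Measurable fun x => ycd q.1 q.2 x (y x) ^ ((1 : ℝ) / 4) := by unfold ycd; fun_prop
  exact (MeasurableSet.const _).inter (measurableSet_lt hf hg)

theorem largeHeightSet_eq_empty_of_nonpos (hR : 1 ≤ R) (hε : 0 ≤ ε)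
    (hy : ∀ x, y x ∈ Set.Ioc 0 1) {c d : ℤ} (hc : c ≤ 0) : largeHeightSet R ε y (c, d) = ∅ := by
  refine Set.eq_empty_of_forall_notMem fun x ⟨hq, hlt⟩ => ?_
  obtain ⟨rfl, rfl⟩ : c = 0 ∧ d = 1 := by
    rcases hq with ⟨h1, -⟩ | h01
    · simp only at h1; omega
    · simpa using h01
  obtain ⟨hy0, hy1⟩ := hy x
  have h1 : y x ^ ((1 : ℝ) / 4) ≤ 1 := rpow_le_one hy0.le hy1 (by norm_num)
  have h2 : 1 ≤ y x ^ (-ε) := one_le_rpow_of_pos_of_le_one_of_nonpos hy0 hy1 (by linarith)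
  norm_num [ycd] at hlt
  nlinarith

theorem largeHeightSet_subset (hR : 0 < R) (hy : ∀ x, 0 < y x) {s : ℝ} (hs : 1 < s)
    (hεs : (1 - 4 * ε) * s = 2) {c : ℕ} (hc : 0 < c) (d : ℤ) :
    largeHeightSet R ε y (c, d)
      ⊆ {x | IsCoprime (c : ℤ) d ∧ |c * x + d| < (c : ℝ) ^ (1 - s) * R ^ (-(2 * s))} := by
  rintro x ⟨hq, hlt⟩
  refine ⟨?_, ?_⟩
  · rcases hq with ⟨-, hcop⟩ | h01
    · exact hcop
    · simp only [Prod.mk.injEq] at h01; omega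
  · simpa using abs_mul_add_lt_of_lt_ycd_rpow (Int.natCast_pos.2 hc) hR (hy x) hs hεs hlt

theorem tsum_volume_largeHeightSet_inter_le (hR : 1 ≤ R) (hε : 0 ≤ ε)
    (hy : ∀ x, y x ∈ Set.Ioc 0 1) {s : ℝ} (hs : 1 < s) (hεs : (1 - 4 * ε) * s = 2) (c : ℤ) :
    ∑' d, volume (largeHeightSet R ε y (c, d) ∩ Set.Ioo 0 1)
      ≤ ENNReal.ofReal (2 * R ^ (-(2 * s)) * (c.toNat.totient / (c.toNat : ℝ) ^ s)) := by
  rcases le_or_gt c 0 with hc | hc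
  · simp [largeHeightSet_eq_empty_of_nonpos hR hε hy hc]
  obtain ⟨n, rfl⟩ := Int.eq_ofNat_of_zero_le hc.le
  have hn : 0 < n := by omega
  set δ := (n : ℝ) ^ (1 - s) * R ^ (-(2 * s)) with hδ_def
  have hδ : δ ≤ 1 :=
    mul_le_one₀ (rpow_le_one_of_one_le_of_nonpos (by exact_mod_cast hn) (by linarith))
      (by positivity) (rpow_le_one_of_one_le_of_nonpos hR (by linarith))
  calc _ ≤ ∑' d : ℤ, volume {x ∈ Set.Ioo (0 : ℝ) 1 | IsCoprime (n : ℤ) d ∧ |n * x + d| < δ} :=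
        ENNReal.tsum_le_tsum fun d => measure_mono fun x hx =>
          ⟨hx.2, largeHeightSet_subset (by linarith) (fun x => (hy x).1) hs hεs hn d hx.1⟩
    _ ≤ ENNReal.ofReal (2 * n.totient * δ / n) := tsum_volume_coprime_abs_mul_add_lt_le hn hδ
    _ = _ := by
      have hn' : (0 : ℝ) < n := by exact_mod_cast hn
      rw [Int.toNat_natCast, hδ_def, rpow_sub hn', rpow_one]
      congr 1
      field_simp

end LargeHeightSet

theorem statement4 (R ε : ℝ) (hR : 1 < R) (hε0 : 0 < ε) (hε : ε < 1 / 4)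
    (y : ℝ → ℝ) (hy : Measurable y) (hy01 : ∀ x, y x ∈ Set.Ioc (0 : ℝ) 1) :
    ∫⁻ x in Set.Ioo (0 : ℝ) 1,
      (({q : ℤ × ℤ | cuspIdx q ∧
          R * (y x) ^ (-ε) < (ycd q.1 q.2 x (y x)) ^ ((1 : ℝ) / 4)}.ncard : ℝ≥0∞))
      ≤ ENNReal.ofReal
          (2 * ((riemannZeta ((2 : ℂ) / (1 - 4 * (ε : ℂ)) - 1)) /
                 (riemannZeta ((2 : ℂ) / (1 - 4 * (ε : ℂ))))).re * R ^ (-(4 : ℝ))) := by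
  set s := 2 / (1 - 4 * ε) with hs_def
  have hεs : (1 - 4 * ε) * s = 2 := mul_div_cancel₀ _ (by linarith)
  have hs : 2 < s := by rw [hs_def, lt_div_iff₀ (by linarith)]; linarith
  have hζ : (2 : ℂ) / (1 - 4 * (ε : ℂ)) = s := by push_cast [hs_def]; rfl
  have hZ := hasSum_totient_div_rpow hs
  rw [hζ]
  set a : ℕ → ℝ≥0∞ := fun n => ENNReal.ofReal (2 * R ^ (-(2 * s)) * (n.totient / (n : ℝ) ^ s))
  calc _ = ∫⁻ x in Set.Ioo (0 : ℝ) 1, ({q | x ∈ largeHeightSet R ε y q}.ncard : ℝ≥0∞) := rfl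
    _ ≤ ∑' q, volume.restrict (Set.Ioo 0 1) (largeHeightSet R ε y q) :=
        lintegral_ncard_le_tsum_measure _ (measurableSet_largeHeightSet hy)
    _ = ∑' (c : ℤ) (d : ℤ), volume (largeHeightSet R ε y (c, d) ∩ Set.Ioo 0 1) := by
        simp_rw [Measure.restrict_apply (measurableSet_largeHeightSet hy _)]
        exact ENNReal.tsum_prod'
    _ ≤ ∑' c : ℤ, a c.toNat :=
        ENNReal.tsum_le_tsum fun c => tsum_volume_largeHeightSet_inter_le hR.le hε0.le
          hy01 (by linarith) hεs c
    _ = ∑' n, a n := tsum_int_toNat (by simp [a])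
    _ = ENNReal.ofReal (2 * R ^ (-(2 * s)) * (riemannZeta (s - 1) / riemannZeta s).re) := by
        rw [← ENNReal.ofReal_tsum_of_nonneg (fun n => by positivity) (hZ.mul_left _).summable,
          (hZ.mul_left _).tsum_eq]
    _ ≤ _ := by
        refine ENNReal.ofReal_le_ofReal ?_
        rw [mul_right_comm]
        have := hZ.nonneg fun n => by positivity
        gcongr
        · exact hR.le
        · linarith
end

section
/- Let λ be a Borel probability measure on ℝ absolutely continuous with respect to Lebesgue measure, let (α, β) ∈ ℝ² ∖ ℚ², and fix 0 ≤ s < t ≤ 1. With m = m(N) = ⌊sN⌋ and n = n(N) = ⌊tN⌋, the following convergences in λ-probability hold as N → ∞: (i) (1/N) Σ_{m+1 ≤ k ≤ n} z_k(x)² → 0; (ii) (1/N) Σ_{m+1 ≤ k ≤ n} a_k(x) b_k(x) → 0; (iii) (1/N) Σ_{m+1 ≤ k ≤ n} a_k(x)² → (t − s)/2; (iv) (1/N) Σ_{m+1 ≤ k ≤ n} b_k(x)² → (t − s)/2. (Here convergence in λ-probability of Y_N to c means that for every ε > 0, λ({x : |Y_N(x) − c| > ε}) → 0.) -/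
open MeasureTheory Filter Topology
open scoped ENNReal

/-- `e(w) = exp(2πiw)`. -/
noncomputable def eC (w : ℝ) : ℂ := Complex.exp (2 * Real.pi * Complex.I * w)

/-- `z_k(x) = e((k²/2 + βk)x + kα)`. -/
noncomputable def zk (α β : ℝ) (k : ℕ) (x : ℝ) : ℂ :=
  eC ((((k : ℝ) ^ 2) / 2 + β * k) * x + k * α)

/-- `a_k(x) = cos(2π((k²/2 + βk)x + kα))`. -/
noncomputable def ak (α β : ℝ) (k : ℕ) (x : ℝ) : ℝ :=
  Real.cos (2 * Real.pi * ((((k : ℝ) ^ 2) / 2 + β * k) * x + k * α))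

/-- `b_k(x) = sin(2π((k²/2 + βk)x + kα))`. -/
noncomputable def bk (α β : ℝ) (k : ℕ) (x : ℝ) : ℝ :=
  Real.sin (2 * Real.pi * ((((k : ℝ) ^ 2) / 2 + β * k) * x + k * α))

/-!
For irrational `x`, hence for `λ`-almost every `x`, the squares
`z_k(x)² = e(x k² + (2βx + 2α) k)` form a quadratic Weyl sequence. Its partial sums are `o(n)` by
van der Corput's inequality: averaging over `H` shifts and applying Cauchy–Schwarz bounds
`|∑_{k<n} u_k| / n` by `√(1/H)` plus the correlations of pairs of distinct shifts, and those are
geometric sums with the irrational ratio `e(2x(h - h'))`, hence bounded. So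
`(1/N) ∑_{m<k≤n} z_k² → 0` almost everywhere; parts (ii)–(iv) follow from
`a_k b_k = Im z_k² / 2` and `a_k², b_k² = (1 ± Re z_k²) / 2`, and almost everywhere convergence
implies convergence in probability.
-/

open Finset ComplexConjugate

lemma eC_eq_exp_mul_I (w : ℝ) : eC w = Complex.exp (((2 * Real.pi * w : ℝ) : ℂ) * Complex.I) := by
  unfold eC; push_cast; ring_nf

lemma norm_eC (w : ℝ) : ‖eC w‖ = 1 := by
  rw [eC_eq_exp_mul_I, Complex.norm_exp_ofReal_mul_I]

lemma eC_add (a b : ℝ) : eC (a + b) = eC a * eC b := by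
  unfold eC; rw [← Complex.exp_add]; push_cast; ring_nf

lemma eC_pow (a : ℝ) (j : ℕ) : eC a ^ j = eC (j * a) := by
  unfold eC; rw [← Complex.exp_nat_mul]; push_cast; ring_nf

lemma conj_eC (w : ℝ) : conj (eC w) = eC (-w) := by
  unfold eC; rw [← Complex.exp_conj]; simp [map_ofNat]

lemma eC_re (w : ℝ) : (eC w).re = Real.cos (2 * Real.pi * w) := by
  rw [eC_eq_exp_mul_I, Complex.exp_ofReal_mul_I_re]

lemma eC_im (w : ℝ) : (eC w).im = Real.sin (2 * Real.pi * w) := by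
  rw [eC_eq_exp_mul_I, Complex.exp_ofReal_mul_I_im]

lemma eC_two_mul_re (w : ℝ) : (eC (2 * w)).re = 2 * Real.cos (2 * Real.pi * w) ^ 2 - 1 := by
  rw [eC_re, mul_left_comm, Real.cos_two_mul]

lemma eC_two_mul_im (w : ℝ) :
    (eC (2 * w)).im = 2 * Real.sin (2 * Real.pi * w) * Real.cos (2 * Real.pi * w) := by
  rw [eC_im, mul_left_comm, Real.sin_two_mul]

lemma eC_ne_one_of_irrational {w : ℝ} (hw : Irrational w) : eC w ≠ 1 := by
  rw [eC, Ne, Complex.exp_eq_one_iff]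
  rintro ⟨n, hn⟩
  have h2πI : 2 * (Real.pi : ℂ) * Complex.I ≠ 0 := by simp [Real.pi_ne_zero]
  exact hw.ne_int n (by exact_mod_cast mul_left_cancel₀ h2πI (hn.trans (mul_comm _ _)))

@[fun_prop]
lemma continuous_eC : Continuous eC := by unfold eC; fun_prop

lemma norm_geom_sum_le_of_norm_eq_one {𝕜 : Type*} [NormedDivisionRing 𝕜] {r : 𝕜} (hr : r ≠ 1)
    (hr₁ : ‖r‖ = 1) (n : ℕ) : ‖∑ j ∈ range n, r ^ j‖ ≤ 2 / ‖r - 1‖ := by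
  rw [geom_sum_eq hr, norm_div]
  gcongr
  calc ‖r ^ n - 1‖ ≤ ‖r ^ n‖ + ‖(1 : 𝕜)‖ := norm_sub_le _ _
    _ = 2 := by rw [norm_pow, hr₁, one_pow, norm_one]; norm_num

noncomputable def correlation (u : ℕ → ℂ) (h h' n : ℕ) : ℂ :=
  ∑ k ∈ range n, u (h + k) * conj (u (h' + k))

section VanDerCorput

variable {u : ℕ → ℂ}

lemma norm_sum_range_le_of_norm_le_one (hu : ∀ k, ‖u k‖ ≤ 1) (n : ℕ) :
    ‖∑ k ∈ range n, u k‖ ≤ n := by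
  simpa using norm_sum_le_of_le (range n) fun k _ => hu k

lemma norm_sum_range_shift_sub_le (hu : ∀ k, ‖u k‖ ≤ 1) (h n : ℕ) :
    ‖∑ k ∈ range n, u k - ∑ k ∈ range n, u (h + k)‖ ≤ 2 * h := by
  have hshift : ∑ k ∈ range n, u k - ∑ k ∈ range n, u (h + k)
      = ∑ k ∈ range h, u k - ∑ k ∈ range h, u (n + k) := by
    have e₁ := sum_range_add u n h
    have e₂ := sum_range_add u h n
    rw [add_comm h n] at e₂
    linear_combination e₂ - e₁
  rw [hshift, two_mul]
  exact (norm_sub_le _ _).trans (add_le_add (norm_sum_range_le_of_norm_le_one hu h)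
    (norm_sum_range_le_of_norm_le_one (fun k => hu (n + k)) h))

lemma norm_mul_sum_range_sub_sum_shifts_le (hu : ∀ k, ‖u k‖ ≤ 1) (H n : ℕ) :
    ‖(H : ℂ) * ∑ k ∈ range n, u k - ∑ k ∈ range n, ∑ h ∈ range H, u (h + k)‖ ≤ 2 * H ^ 2 := by
  rw [sum_comm, show (H : ℂ) * ∑ k ∈ range n, u k = ∑ h ∈ range H, ∑ k ∈ range n, u k by simp,
    ← sum_sub_distrib]
  calc ‖∑ h ∈ range H, (∑ k ∈ range n, u k - ∑ k ∈ range n, u (h + k))‖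
      ≤ ∑ h ∈ range H, (2 * H : ℝ) := by
        refine norm_sum_le_of_le _ fun h hh => (norm_sum_range_shift_sub_le hu h n).trans ?_
        gcongr
        exact (mem_range.1 hh).le
    _ = 2 * H ^ 2 := by simp; ring

lemma sum_norm_sq_sum_shifts_le (hu : ∀ k, ‖u k‖ ≤ 1) (H n : ℕ) :
    ∑ k ∈ range n, ‖∑ h ∈ range H, u (h + k)‖ ^ 2
      ≤ H * n + ∑ p ∈ (range H).offDiag, ‖correlation u p.1 p.2 n‖ := by
  have hexpand : ((∑ k ∈ range n, ‖∑ h ∈ range H, u (h + k)‖ ^ 2 : ℝ) : ℂ)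
      = ∑ p ∈ range H ×ˢ range H, correlation u p.1 p.2 n := by
    simp only [Complex.ofReal_sum, Complex.ofReal_pow, ← Complex.mul_conj', map_sum, sum_mul_sum,
      correlation, sum_product]
    rw [sum_comm]
    exact sum_congr rfl fun h _ => sum_comm
  have hdiag (h : ℕ) : ‖correlation u h h n‖ ≤ n := by
    have hterm (k : ℕ) : ‖u (h + k) * conj (u (h + k))‖ ≤ 1 := by
      simpa using mul_le_one₀ (hu (h + k)) (norm_nonneg _) (hu (h + k))
    simpa [correlation] using norm_sum_le_of_le (range n) fun k _ => hterm k
  calc ∑ k ∈ range n, ‖∑ h ∈ range H, u (h + k)‖ ^ 2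
      = ‖((∑ k ∈ range n, ‖∑ h ∈ range H, u (h + k)‖ ^ 2 : ℝ) : ℂ)‖ := by
        rw [Complex.norm_real, Real.norm_of_nonneg (by positivity)]
    _ ≤ ∑ p ∈ range H ×ˢ range H, ‖correlation u p.1 p.2 n‖ := by
        rw [hexpand]; exact norm_sum_le _ _
    _ = ∑ h ∈ range H, ‖correlation u h h n‖
          + ∑ p ∈ (range H).offDiag, ‖correlation u p.1 p.2 n‖ := by
        rw [← diag_union_offDiag, sum_union (disjoint_diag_offDiag _), sum_diag]
    _ ≤ H * n + ∑ p ∈ (range H).offDiag, ‖correlation u p.1 p.2 n‖ := by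
        gcongr
        simpa using sum_le_sum fun h (_ : h ∈ range H) => hdiag h

lemma norm_sum_range_div_le_vanDerCorput (hu : ∀ k, ‖u k‖ ≤ 1) {H n : ℕ} (hH : 0 < H)
    (hn : 0 < n) :
    ‖∑ k ∈ range n, u k‖ / n
      ≤ 2 * H / n + √(H + (∑ p ∈ (range H).offDiag, ‖correlation u p.1 p.2 n‖) / n) / H := by
  set A := ∑ k ∈ range n, u k
  set G := ∑ k ∈ range n, ∑ h ∈ range H, u (h + k)
  set C := ∑ p ∈ (range H).offDiag, ‖correlation u p.1 p.2 n‖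
  have hn' : (0 : ℝ) < n := by exact_mod_cast hn
  have hH' : (0 : ℝ) < H := by exact_mod_cast hH
  have hG : ‖G‖ ≤ n * √(H + C / n) := by
    refine (pow_le_pow_iff_left₀ (norm_nonneg _) (by positivity) two_ne_zero).1 ?_
    rw [mul_pow, Real.sq_sqrt (by positivity)]
    calc ‖G‖ ^ 2 ≤ (∑ k ∈ range n, ‖∑ h ∈ range H, u (h + k)‖) ^ 2 := by
          gcongr; exact norm_sum_le _ _
      _ ≤ n * ∑ k ∈ range n, ‖∑ h ∈ range H, u (h + k)‖ ^ 2 := by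
          simpa using sq_sum_le_card_mul_sum_sq (s := range n)
            (f := fun k => ‖∑ h ∈ range H, u (h + k)‖)
      _ ≤ n * (H * n + C) := by gcongr; exact sum_norm_sq_sum_shifts_le hu H n
      _ = n ^ 2 * (H + C / n) := by field_simp
  have hHA : H * ‖A‖ ≤ 2 * H ^ 2 + n * √(H + C / n) :=
    calc (H : ℝ) * ‖A‖ = ‖(H : ℂ) * A - G + G‖ := by simp
      _ ≤ ‖(H : ℂ) * A - G‖ + ‖G‖ := norm_add_le _ _
      _ ≤ _ := add_le_add (norm_mul_sum_range_sub_sum_shifts_le hu H n) hG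
  rw [div_le_iff₀ hn']
  calc ‖A‖ = (H * ‖A‖) / H := by field_simp
    _ ≤ (2 * H ^ 2 + n * √(H + C / n)) / H := by gcongr
    _ = _ := by field_simp

theorem tendsto_norm_sum_range_div_of_correlation (hu : ∀ k, ‖u k‖ ≤ 1)
    (hcorr : ∀ h h', h ≠ h' → Tendsto (fun n : ℕ => ‖correlation u h h' n‖ / n) atTop (𝓝 0)) :
    Tendsto (fun n : ℕ => ‖∑ k ∈ range n, u k‖ / n) atTop (𝓝 0) := by
  refine tendsto_order.2 ⟨fun a ha => Eventually.of_forall fun n => ha.trans_le (by positivity),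
    fun ε hε => ?_⟩
  obtain ⟨H, hH⟩ := exists_nat_gt (1 / ε ^ 2)
  have hH₀ : 0 < H := Nat.cast_pos.1 (lt_trans (by positivity) hH)
  have hlimit : √H / H < ε := by
    have : 1 / ε < √H := by rw [Real.lt_sqrt (by positivity), div_pow, one_pow]; exact hH
    rw [Real.sqrt_div_self']
    exact (one_div_lt (by positivity) hε).2 this
  have hC : Tendsto (fun n : ℕ => (∑ p ∈ (range H).offDiag, ‖correlation u p.1 p.2 n‖) / n)
      atTop (𝓝 0) := by
    simp_rw [sum_div]
    simpa using tendsto_finsetSum _ fun p hp => hcorr p.1 p.2 (mem_offDiag.1 hp).2.2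
  have hR : Tendsto (fun n : ℕ =>
      2 * H / n + √(H + (∑ p ∈ (range H).offDiag, ‖correlation u p.1 p.2 n‖) / n) / H)
      atTop (𝓝 (0 + √(H + 0) / H)) :=
    (tendsto_const_div_atTop_nhds_zero_nat _).add
      (((tendsto_const_nhds.add hC).sqrt).div_const _)
  rw [zero_add, add_zero] at hR
  filter_upwards [hR.eventually_lt_const hlimit, eventually_gt_atTop 0] with n hn hn₀
  exact (norm_sum_range_div_le_vanDerCorput hu hH₀ hn₀).trans_lt hn

end VanDerCorput

lemma correlation_eC_quadratic (x γ : ℝ) (h h' n : ℕ) :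
    correlation (fun k : ℕ => eC (x * k ^ 2 + γ * k)) h h' n
      = eC (x * ((h : ℝ) ^ 2 - h' ^ 2) + γ * (h - h'))
          * ∑ k ∈ range n, eC (2 * x * (h - h')) ^ k := by
  rw [correlation, mul_sum]
  refine sum_congr rfl fun k _ => ?_
  rw [conj_eC, ← eC_add, eC_pow, ← eC_add]
  push_cast
  ring_nf

theorem tendsto_norm_sum_range_eC_quadratic_div {x : ℝ} (hx : Irrational x) (γ : ℝ) :
    Tendsto (fun n : ℕ => ‖∑ k ∈ range n, eC (x * k ^ 2 + γ * k)‖ / n) atTop (𝓝 0) := by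
  refine tendsto_norm_sum_range_div_of_correlation (fun k => (norm_eC _).le) fun h h' hne => ?_
  -- for `h ≠ h'` the correlation is a geometric sum with irrational ratio, hence bounded in `n`
  have hratio : Irrational (2 * x * (h - h')) := by
    have := hx.intCast_mul (m := 2 * ((h : ℤ) - h')) (by omega)
    convert this using 1
    push_cast
    ring
  refine squeeze_zero (fun n => by positivity) (fun n => ?_)
    (tendsto_const_div_atTop_nhds_zero_nat (2 / ‖eC (2 * x * (h - h')) - 1‖))
  gcongr
  rw [correlation_eC_quadratic, norm_mul, norm_eC, one_mul]
  exact norm_geom_sum_le_of_norm_eq_one (eC_ne_one_of_irrational hratio) (norm_eC _) n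

lemma tendsto_apply_floor_mul_add_one_div {a : ℕ → ℝ}
    (ha : Tendsto (fun n : ℕ => a n / n) atTop (𝓝 0)) {c : ℝ} (hc : 0 ≤ c) :
    Tendsto (fun N : ℕ => a (⌊c * N⌋₊ + 1) / N) atTop (𝓝 0) := by
  rcases hc.eq_or_lt with rfl | hc
  · simpa using tendsto_const_div_atTop_nhds_zero_nat (a 1)
  have hφ : Tendsto (fun N : ℕ => ⌊c * N⌋₊ + 1) atTop atTop :=
    tendsto_add_atTop_nat 1 |>.comp <| tendsto_nat_floor_atTop.comp <|
      tendsto_natCast_atTop_atTop.const_mul_atTop hc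
  have hφN : Tendsto (fun N : ℕ => ((⌊c * N⌋₊ + 1 : ℕ) : ℝ) / N) atTop (𝓝 (c + 0)) := by
    refine ((tendsto_nat_floor_mul_div_atTop hc.le).comp tendsto_natCast_atTop_atTop).add
      (tendsto_const_div_atTop_nhds_zero_nat 1) |>.congr fun N => ?_
    simp [add_div]
  simpa using ((ha.comp hφ).mul hφN).congr fun N : ℕ =>
    div_mul_div_cancel₀ (by positivity : ((⌊c * N⌋₊ + 1 : ℕ) : ℝ) ≠ 0)

lemma tendsto_card_window_div {s t : ℝ} (hs : 0 ≤ s) (hst : s ≤ t) :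
    Tendsto (fun N : ℕ => (#(Icc (⌊s * N⌋₊ + 1) ⌊t * N⌋₊) : ℝ) / N) atTop (𝓝 (t - s)) := by
  have hfloor {c : ℝ} (hc : 0 ≤ c) : Tendsto (fun N : ℕ => (⌊c * N⌋₊ : ℝ) / N) atTop (𝓝 c) :=
    (tendsto_nat_floor_mul_div_atTop hc).comp tendsto_natCast_atTop_atTop
  refine ((hfloor (hs.trans hst)).sub (hfloor hs)).congr fun N => ?_
  rw [Nat.card_Icc, Nat.add_sub_add_right, Nat.cast_sub (by gcongr), sub_div]

lemma zk_sq (α β : ℝ) (k : ℕ) (x : ℝ) :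
    zk α β k x ^ 2 = eC (2 * ((((k : ℝ) ^ 2) / 2 + β * k) * x + k * α)) := by
  rw [zk, sq, ← eC_add, two_mul]

lemma ak_mul_bk (α β : ℝ) (k : ℕ) (x : ℝ) :
    ak α β k x * bk α β k x = (zk α β k x ^ 2).im / 2 := by
  rw [zk_sq, eC_two_mul_im, ak, bk]
  ring

lemma ak_sq (α β : ℝ) (k : ℕ) (x : ℝ) : ak α β k x ^ 2 = (1 + (zk α β k x ^ 2).re) / 2 := by
  rw [zk_sq, eC_two_mul_re, ak]
  ring

lemma bk_sq (α β : ℝ) (k : ℕ) (x : ℝ) : bk α β k x ^ 2 = (1 - (zk α β k x ^ 2).re) / 2 := by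
  rw [zk_sq, eC_two_mul_re, bk, Real.sin_sq]
  ring

@[fun_prop]
lemma continuous_zk (α β : ℝ) (k : ℕ) : Continuous (zk α β k) := by unfold zk; fun_prop

@[fun_prop]
lemma continuous_ak (α β : ℝ) (k : ℕ) : Continuous (ak α β k) := by unfold ak; fun_prop

@[fun_prop]
lemma continuous_bk (α β : ℝ) (k : ℕ) : Continuous (bk α β k) := by unfold bk; fun_prop

section Window

variable {α β s t x : ℝ}

lemma tendsto_window_zk_sq (hs : 0 ≤ s) (hst : s ≤ t) (hx : Irrational x) :
    Tendsto (fun N : ℕ => ((N : ℝ) : ℂ)⁻¹ *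
      ∑ k ∈ Icc (⌊s * N⌋₊ + 1) ⌊t * N⌋₊, zk α β k x ^ 2) atTop (𝓝 0) := by
  set S : ℕ → ℂ := fun n => ∑ k ∈ range n, eC (x * k ^ 2 + (2 * β * x + 2 * α) * k)
  have hS : Tendsto (fun n : ℕ => ‖S n‖ / n) atTop (𝓝 0) :=
    tendsto_norm_sum_range_eC_quadratic_div hx _
  have hwindow (N : ℕ) : ∑ k ∈ Icc (⌊s * N⌋₊ + 1) ⌊t * N⌋₊, zk α β k x ^ 2
      = S (⌊t * N⌋₊ + 1) - S (⌊s * N⌋₊ + 1) := by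
    rw [← Ico_add_one_right_eq_Icc, sum_Ico_eq_sub _ (by gcongr)]
    congr 1 <;> exact sum_congr rfl fun k _ => by rw [zk_sq]; congr 1; ring
  have hbound : Tendsto (fun N : ℕ => ‖S (⌊t * N⌋₊ + 1)‖ / N + ‖S (⌊s * N⌋₊ + 1)‖ / N)
      atTop (𝓝 (0 + 0)) :=
    (tendsto_apply_floor_mul_add_one_div hS (hs.trans hst)).add
      (tendsto_apply_floor_mul_add_one_div hS hs)
  rw [add_zero] at hbound
  rw [tendsto_zero_iff_norm_tendsto_zero]
  refine squeeze_zero (fun N => norm_nonneg _) (fun N => ?_) hbound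
  calc ‖((N : ℝ) : ℂ)⁻¹ * ∑ k ∈ Icc (⌊s * N⌋₊ + 1) ⌊t * N⌋₊, zk α β k x ^ 2‖
      = ‖S (⌊t * N⌋₊ + 1) - S (⌊s * N⌋₊ + 1)‖ / N := by simp [hwindow, div_eq_inv_mul]
    _ ≤ (‖S (⌊t * N⌋₊ + 1)‖ + ‖S (⌊s * N⌋₊ + 1)‖) / N := by gcongr; exact norm_sub_le _ _
    _ = _ := add_div _ _ _

lemma tendsto_window_ak_mul_bk (hs : 0 ≤ s) (hst : s ≤ t) (hx : Irrational x) :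
    Tendsto (fun N : ℕ => (N : ℝ)⁻¹ *
      ∑ k ∈ Icc (⌊s * N⌋₊ + 1) ⌊t * N⌋₊, ak α β k x * bk α β k x) atTop (𝓝 0) := by
  have him := ((Complex.continuous_im.tendsto 0).comp
    (tendsto_window_zk_sq (α := α) (β := β) hs hst hx)).div_const 2
  rw [Complex.zero_im, zero_div] at him
  refine him.congr fun N => ?_
  rw [Function.comp_apply, ← Complex.ofReal_inv, Complex.im_ofReal_mul, Complex.im_sum,
    sum_congr rfl fun k _ => ak_mul_bk α β k x, ← sum_div]
  ring

lemma tendsto_window_ak_sq (hs : 0 ≤ s) (hst : s ≤ t) (hx : Irrational x) :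
    Tendsto (fun N : ℕ => (N : ℝ)⁻¹ *
      ∑ k ∈ Icc (⌊s * N⌋₊ + 1) ⌊t * N⌋₊, ak α β k x ^ 2) atTop (𝓝 ((t - s) / 2)) := by
  have hre := ((tendsto_card_window_div hs hst).div_const 2).add
    (((Complex.continuous_re.tendsto 0).comp
      (tendsto_window_zk_sq (α := α) (β := β) hs hst hx)).div_const 2)
  rw [Complex.zero_re, zero_div, add_zero] at hre
  refine hre.congr fun N => ?_
  rw [Function.comp_apply, ← Complex.ofReal_inv, Complex.re_ofReal_mul, Complex.re_sum,
    sum_congr rfl fun k _ => ak_sq α β k x, ← sum_div, sum_add_distrib, sum_const, nsmul_eq_mul,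
    mul_one]
  ring

lemma tendsto_window_bk_sq (hs : 0 ≤ s) (hst : s ≤ t) (hx : Irrational x) :
    Tendsto (fun N : ℕ => (N : ℝ)⁻¹ *
      ∑ k ∈ Icc (⌊s * N⌋₊ + 1) ⌊t * N⌋₊, bk α β k x ^ 2) atTop (𝓝 ((t - s) / 2)) := by
  have hre := ((tendsto_card_window_div hs hst).div_const 2).sub
    (((Complex.continuous_re.tendsto 0).comp
      (tendsto_window_zk_sq (α := α) (β := β) hs hst hx)).div_const 2)
  rw [Complex.zero_re, zero_div, sub_zero] at hre
  refine hre.congr fun N => ?_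
  rw [Function.comp_apply, ← Complex.ofReal_inv, Complex.re_ofReal_mul, Complex.re_sum,
    sum_congr rfl fun k _ => bk_sq α β k x, ← sum_div, sum_sub_distrib, sum_const, nsmul_eq_mul,
    mul_one]
  ring

end Window

lemma ae_irrational_of_absolutelyContinuous {μ : Measure ℝ} (hμ : μ ≪ volume) :
    ∀ᵐ x ∂μ, Irrational x :=
  hμ.ae_le ((Set.countable_range ((↑) : ℚ → ℝ)).ae_notMem volume)

lemma tendsto_measure_lt_norm_sub_of_ae_tendsto {Ω E : Type*} [MeasurableSpace Ω]
    [NormedAddCommGroup E] {μ : Measure Ω} [IsFiniteMeasure μ] {f : ℕ → Ω → E} {c : E}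
    (hf : ∀ N, AEStronglyMeasurable (f N) μ)
    (hfc : ∀ᵐ x ∂μ, Tendsto (fun N => f N x) atTop (𝓝 c)) {ε : ℝ} (hε : 0 < ε) :
    Tendsto (fun N => μ {x | ε < ‖f N x - c‖}) atTop (𝓝 0) :=
  tendsto_of_tendsto_of_tendsto_of_le_of_le tendsto_const_nhds
    (tendstoInMeasure_iff_norm.1 (tendstoInMeasure_of_tendsto_ae hf hfc) ε hε)
    (fun _ => zero_le) fun _ => measure_mono <| Set.ofPred_subset_ofPred.2 fun _ => le_of_lt

theorem statement8_general
    (lam : Measure ℝ) (hprob : IsProbabilityMeasure lam)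
    (hac : lam ≪ (volume : Measure ℝ))
    (α β : ℝ)
    (s t : ℝ) (hs : 0 ≤ s) (hst : s < t) :
    (∀ ε : ℝ, 0 < ε →
      Tendsto (fun N : ℕ =>
          lam {x : ℝ | ε < ‖(((N : ℝ) : ℂ)⁻¹ *
            ∑ k ∈ Finset.Icc (⌊s * (N : ℝ)⌋₊ + 1) ⌊t * (N : ℝ)⌋₊, (zk α β k x) ^ 2)‖})
        atTop (𝓝 0)) ∧
    (∀ ε : ℝ, 0 < ε →
      Tendsto (fun N : ℕ =>
          lam {x : ℝ | ε < |(N : ℝ)⁻¹ *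
            ∑ k ∈ Finset.Icc (⌊s * (N : ℝ)⌋₊ + 1) ⌊t * (N : ℝ)⌋₊, ak α β k x * bk α β k x|})
        atTop (𝓝 0)) ∧
    (∀ ε : ℝ, 0 < ε →
      Tendsto (fun N : ℕ =>
          lam {x : ℝ | ε < |(N : ℝ)⁻¹ *
            (∑ k ∈ Finset.Icc (⌊s * (N : ℝ)⌋₊ + 1) ⌊t * (N : ℝ)⌋₊, (ak α β k x) ^ 2) -
              (t - s) / 2|})
        atTop (𝓝 0)) ∧
    (∀ ε : ℝ, 0 < ε →
      Tendsto (fun N : ℕ =>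
          lam {x : ℝ | ε < |(N : ℝ)⁻¹ *
            (∑ k ∈ Finset.Icc (⌊s * (N : ℝ)⌋₊ + 1) ⌊t * (N : ℝ)⌋₊, (bk α β k x) ^ 2) -
              (t - s) / 2|})
        atTop (𝓝 0)) := by
  have hirr := ae_irrational_of_absolutelyContinuous hac
  refine ⟨fun ε hε => ?_, fun ε hε => ?_, fun ε hε => ?_, fun ε hε => ?_⟩
  · simpa using tendsto_measure_lt_norm_sub_of_ae_tendsto
      (fun N => Continuous.aestronglyMeasurable (by fun_prop))
      (hirr.mono fun x hx => tendsto_window_zk_sq hs hst.le hx) hε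
  · simpa using tendsto_measure_lt_norm_sub_of_ae_tendsto
      (fun N => Continuous.aestronglyMeasurable (by fun_prop))
      (hirr.mono fun x hx => tendsto_window_ak_mul_bk hs hst.le hx) hε
  · simpa [Real.norm_eq_abs] using tendsto_measure_lt_norm_sub_of_ae_tendsto
      (fun N => Continuous.aestronglyMeasurable (by fun_prop))
      (hirr.mono fun x hx => tendsto_window_ak_sq hs hst.le hx) hε
  · simpa [Real.norm_eq_abs] using tendsto_measure_lt_norm_sub_of_ae_tendsto
      (fun N => Continuous.aestronglyMeasurable (by fun_prop))
      (hirr.mono fun x hx => tendsto_window_bk_sq hs hst.le hx) hε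

theorem statement8
    (lam : Measure ℝ) (hprob : IsProbabilityMeasure lam)
    (hac : lam ≪ (volume : Measure ℝ))
    (α β : ℝ) (hirr : ¬ ∃ a b : ℚ, α = (a : ℝ) ∧ β = (b : ℝ))
    (s t : ℝ) (hs : 0 ≤ s) (hst : s < t) (ht : t ≤ 1) :
    (∀ ε : ℝ, 0 < ε →
      Tendsto (fun N : ℕ =>
          lam {x : ℝ | ε < ‖(((N : ℝ) : ℂ)⁻¹ *
            ∑ k ∈ Finset.Icc (⌊s * (N : ℝ)⌋₊ + 1) ⌊t * (N : ℝ)⌋₊, (zk α β k x) ^ 2)‖})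
        atTop (𝓝 0)) ∧
    (∀ ε : ℝ, 0 < ε →
      Tendsto (fun N : ℕ =>
          lam {x : ℝ | ε < |(N : ℝ)⁻¹ *
            ∑ k ∈ Finset.Icc (⌊s * (N : ℝ)⌋₊ + 1) ⌊t * (N : ℝ)⌋₊, ak α β k x * bk α β k x|})
        atTop (𝓝 0)) ∧
    (∀ ε : ℝ, 0 < ε →
      Tendsto (fun N : ℕ =>
          lam {x : ℝ | ε < |(N : ℝ)⁻¹ *
            (∑ k ∈ Finset.Icc (⌊s * (N : ℝ)⌋₊ + 1) ⌊t * (N : ℝ)⌋₊, (ak α β k x) ^ 2) -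
              (t - s) / 2|})
        atTop (𝓝 0)) ∧
    (∀ ε : ℝ, 0 < ε →
      Tendsto (fun N : ℕ =>
          lam {x : ℝ | ε < |(N : ℝ)⁻¹ *
            (∑ k ∈ Finset.Icc (⌊s * (N : ℝ)⌋₊ + 1) ⌊t * (N : ℝ)⌋₊, (bk α β k x) ^ 2) -
              (t - s) / 2|})
        atTop (𝓝 0)) :=
  statement8_general lam hprob hac α β s t hs hst
end

section
/- Let f₀ : ℝ → ℝ satisfy f₀(x) = 0 for x ≤ 0, f₀(x) = 1 for x ≥ 1, and f₀(x) + f₀(1 − x) = 1 for 0 < x < 1. Let 0 < c₁ < c₂ < c₃ be in geometric progression, c₂ = p c₁ and c₃ = p c₂ with p > 1, and let F = F_{c₁,c₂,c₃}(x) = Σ_{j=0}^∞ f_{c₁,c₂,c₃}(p^j x). Then for every x ∈ ℝ: F(x) + F(c₂ + c₃ − x) = 𝟙_{(0, c₂+c₃)}(x). (In particular, with c₁ = 1/6, c₂ = 1/3, c₃ = 2/3, the functions χ_L(x) = F(x) and χ_R(x) = F(1 − x) satisfy χ_L + χ_R = 𝟙_{(0,1)}.) -/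
/-- The bump `f_{c₁,c₂,c₃}` built from the template `f₀`. -/
noncomputable def fc (f₀ : ℝ → ℝ) (c₁ c₂ c₃ : ℝ) (x : ℝ) : ℝ :=
  if x ≤ c₁ then 0
  else if x ≤ c₂ then f₀ ((x - c₁) / (c₂ - c₁))
  else if x ≤ c₃ then f₀ ((c₃ - x) / (c₃ - c₂))
  else 0

/-- `F_{c₁,c₂,c₃}(x) = Σ_{j=0}^∞ f_{c₁,c₂,c₃}(p^j x)`. -/
noncomputable def Fc (f₀ : ℝ → ℝ) (c₁ c₂ c₃ p : ℝ) (x : ℝ) : ℝ :=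
  ∑' j : ℕ, fc f₀ c₁ c₂ c₃ (p ^ j * x)

/-!
`F` satisfies the functional equation `F x = f x + F (p x)`, where `f = f_{c₁,c₂,c₃}`.
On `[c₂, ∞)` all terms but the first vanish, so `F = f` there, and the symmetry of `f₀` makes
`f x + f (c₂ + c₃ - x) = 1` on `(c₂, c₃)`. On `(c₁, c₂]` only `f x + f (p x)` survives, which is
`1` because `x ↦ p x` carries the rising edge `(c₁, c₂]` of `f` onto its falling edge `(c₂, c₃]`;
the functional equation then propagates `F = 1` down to all of `(0, c₂]`.
-/

open Set

theorem add_apply_one_sub_eq_one_of_mem_Icc {f₀ : ℝ → ℝ} (h0 : f₀ 0 = 0) (h1 : f₀ 1 = 1)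
    (hsym : ∀ t : ℝ, 0 < t → t < 1 → f₀ t + f₀ (1 - t) = 1) :
    ∀ t ∈ Icc (0 : ℝ) 1, f₀ t + f₀ (1 - t) = 1 := by
  rintro t ⟨ht₀, ht₁⟩
  rcases ht₀.eq_or_lt with rfl | ht₀
  · simp [h0, h1]
  rcases ht₁.eq_or_lt with rfl | ht₁
  · simp [h0, h1]
  exact hsym t ht₀ ht₁

section Bump

variable {f₀ : ℝ → ℝ} {c₁ c₂ c₃ z : ℝ}

theorem fc_of_le_left (h : z ≤ c₁) : fc f₀ c₁ c₂ c₃ z = 0 := by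
  simp [fc, h]

theorem fc_of_mem_Ioc_left (h : z ∈ Ioc c₁ c₂) :
    fc f₀ c₁ c₂ c₃ z = f₀ ((z - c₁) / (c₂ - c₁)) := by
  simp [fc, h.1.not_ge, h.2]

theorem fc_of_mem_Ioc_right (h₁₂ : c₁ ≤ c₂) (h : z ∈ Ioc c₂ c₃) :
    fc f₀ c₁ c₂ c₃ z = f₀ ((c₃ - z) / (c₃ - c₂)) := by
  simp [fc, (h₁₂.trans_lt h.1).not_ge, h.1.not_ge, h.2]

theorem fc_of_ge_right (h0 : f₀ 0 = 0) (h₂₃ : c₂ < c₃) (h : c₃ ≤ z) : fc f₀ c₁ c₂ c₃ z = 0 := by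
  unfold fc
  split_ifs with h₁ h₂ h₃
  · rfl
  · exact absurd (h.trans h₂) h₂₃.not_ge
  · rw [le_antisymm h₃ h, sub_self, zero_div, h0]
  · rfl

theorem fc_add_fc_reflect (hsym : ∀ t ∈ Icc (0 : ℝ) 1, f₀ t + f₀ (1 - t) = 1) (h₁₂ : c₁ ≤ c₂)
    (hz : z ∈ Ioo c₂ c₃) : fc f₀ c₁ c₂ c₃ z + fc f₀ c₁ c₂ c₃ (c₂ + c₃ - z) = 1 := by
  obtain ⟨hz₂, hz₃⟩ := hz
  have hd : 0 < c₃ - c₂ := by linarith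
  rw [fc_of_mem_Ioc_right h₁₂ ⟨hz₂, hz₃.le⟩,
    fc_of_mem_Ioc_right h₁₂ ⟨by linarith, by linarith⟩]
  have hreflect : (c₃ - (c₂ + c₃ - z)) / (c₃ - c₂) = 1 - (c₃ - z) / (c₃ - c₂) := by
    field_simp
    ring
  rw [hreflect]
  refine hsym _ ⟨by positivity, ?_⟩
  rw [div_le_one hd]
  linarith

theorem fc_add_fc_mul_eq_one (hsym : ∀ t ∈ Icc (0 : ℝ) 1, f₀ t + f₀ (1 - t) = 1) {p : ℝ}
    (hp : 1 < p) (hc₂ : c₂ = p * c₁) (hc₃ : c₃ = p * c₂) (hz : z ∈ Ioc c₁ c₂) :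
    fc f₀ c₁ c₂ c₃ z + fc f₀ c₁ c₂ c₃ (p * z) = 1 := by
  obtain ⟨hz₁, hz₂⟩ := hz
  have h₁₂ : c₁ ≤ c₂ := by linarith
  have hd : 0 < c₂ - c₁ := by linarith
  have hpz : p * z ∈ Ioc c₂ c₃ := by
    constructor <;> nlinarith
  rw [fc_of_mem_Ioc_left ⟨hz₁, hz₂⟩, fc_of_mem_Ioc_right h₁₂ hpz]
  have hedge : (c₃ - p * z) / (c₃ - c₂) = 1 - (z - c₁) / (c₂ - c₁) := by
    have hp0 : p ≠ 0 := by positivity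
    rw [show c₃ - p * z = p * (c₂ - z) by rw [hc₃]; ring,
      show c₃ - c₂ = p * (c₂ - c₁) by rw [hc₃, hc₂]; ring, mul_div_mul_left _ _ hp0]
    field_simp
    ring
  rw [hedge]
  refine hsym _ ⟨by positivity, ?_⟩
  rw [div_le_one hd]
  linarith

end Bump

section Series

variable {f₀ : ℝ → ℝ} {c₁ c₂ c₃ p x : ℝ}

theorem Fc_eq_zero_of_forall (h : ∀ j : ℕ, fc f₀ c₁ c₂ c₃ (p ^ j * x) = 0) :
    Fc f₀ c₁ c₂ c₃ p x = 0 := by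
  simp [Fc, h]

theorem Fc_eq_zero_of_nonpos (hc₁ : 0 < c₁) (hp : 0 < p) (hx : x ≤ 0) :
    Fc f₀ c₁ c₂ c₃ p x = 0 :=
  Fc_eq_zero_of_forall fun j =>
    fc_of_le_left ((mul_nonpos_of_nonneg_of_nonpos (pow_pos hp j).le hx).trans hc₁.le)

theorem Fc_eq_zero_of_ge (h0 : f₀ 0 = 0) (h₂₃ : c₂ < c₃) (hc₃ : 0 < c₃) (hp : 1 ≤ p)
    (hx : c₃ ≤ x) : Fc f₀ c₁ c₂ c₃ p x = 0 :=
  Fc_eq_zero_of_forall fun j =>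
    fc_of_ge_right h0 h₂₃ (hx.trans (le_mul_of_one_le_left (by linarith) (one_le_pow₀ hp)))

theorem summable_fc_pow_mul (h0 : f₀ 0 = 0) (hc₁ : 0 < c₁) (h₂₃ : c₂ < c₃)
    (hp : 1 < p) (x : ℝ) : Summable fun j : ℕ => fc f₀ c₁ c₂ c₃ (p ^ j * x) := by
  rcases le_or_gt x 0 with hx | hx
  · refine summable_of_ne_finset_zero (s := ∅) fun j _ => fc_of_le_left ?_
    exact (mul_nonpos_of_nonneg_of_nonpos (by positivity) hx).trans hc₁.le
  · obtain ⟨N, hN⟩ := pow_unbounded_of_one_lt (c₃ / x) hp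
    refine summable_of_ne_finset_zero (s := Finset.range N) fun j hj => fc_of_ge_right h0 h₂₃ ?_
    have hNj : p ^ N ≤ p ^ j := pow_le_pow_right₀ hp.le (by simpa using hj)
    rw [div_lt_iff₀ hx] at hN
    nlinarith

theorem Fc_eq_fc_add_Fc_mul (h0 : f₀ 0 = 0) (hc₁ : 0 < c₁) (h₂₃ : c₂ < c₃)
    (hp : 1 < p) (x : ℝ) : Fc f₀ c₁ c₂ c₃ p x = fc f₀ c₁ c₂ c₃ x + Fc f₀ c₁ c₂ c₃ p (p * x) := by
  simp only [Fc, (summable_fc_pow_mul h0 hc₁ h₂₃ hp x).tsum_eq_zero_add, pow_zero, one_mul,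
    pow_succ, mul_assoc]

end Series

section Geometric

variable {f₀ : ℝ → ℝ} {c₁ c₂ c₃ p x : ℝ}

theorem lt_and_lt_of_geometric (hc₁ : 0 < c₁) (hp : 1 < p) (hc₂ : c₂ = p * c₁)
    (hc₃ : c₃ = p * c₂) : c₁ < c₂ ∧ c₂ < c₃ := by
  have h₁₂ : c₁ < c₂ := hc₂ ▸ lt_mul_of_one_lt_left hc₁ hp
  exact ⟨h₁₂, hc₃ ▸ lt_mul_of_one_lt_left (hc₁.trans h₁₂) hp⟩

theorem Fc_eq_fc_of_le (h0 : f₀ 0 = 0) (hc₁ : 0 < c₁) (hp : 1 < p) (hc₂ : c₂ = p * c₁)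
    (hc₃ : c₃ = p * c₂) (hx : c₂ ≤ x) : Fc f₀ c₁ c₂ c₃ p x = fc f₀ c₁ c₂ c₃ x := by
  obtain ⟨h₁₂, h₂₃⟩ := lt_and_lt_of_geometric hc₁ hp hc₂ hc₃
  have hpx : c₃ ≤ p * x := hc₃ ▸ mul_le_mul_of_nonneg_left hx (by linarith)
  rw [Fc_eq_fc_add_Fc_mul h0 hc₁ h₂₃ hp, Fc_eq_zero_of_ge h0 h₂₃ (by linarith) hp.le hpx, add_zero]

theorem Fc_eq_one_of_mem_Ioc (h0 : f₀ 0 = 0) (hsym : ∀ t ∈ Icc (0 : ℝ) 1, f₀ t + f₀ (1 - t) = 1)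
    (hc₁ : 0 < c₁) (hp : 1 < p) (hc₂ : c₂ = p * c₁) (hc₃ : c₃ = p * c₂) (hx : x ∈ Ioc c₁ c₂) :
    Fc f₀ c₁ c₂ c₃ p x = 1 := by
  obtain ⟨-, h₂₃⟩ := lt_and_lt_of_geometric hc₁ hp hc₂ hc₃
  have hpx : c₂ ≤ p * x := hc₂ ▸ mul_le_mul_of_nonneg_left hx.1.le (by linarith)
  rw [Fc_eq_fc_add_Fc_mul h0 hc₁ h₂₃ hp, Fc_eq_fc_of_le h0 hc₁ hp hc₂ hc₃ hpx]
  exact fc_add_fc_mul_eq_one hsym hp hc₂ hc₃ hx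

theorem Fc_eq_one_of_pos_of_le (h0 : f₀ 0 = 0)
    (hsym : ∀ t ∈ Icc (0 : ℝ) 1, f₀ t + f₀ (1 - t) = 1) (hc₁ : 0 < c₁) (hp : 1 < p)
    (hc₂ : c₂ = p * c₁) (hc₃ : c₃ = p * c₂) (hx₀ : 0 < x) (hx : x ≤ c₂) :
    Fc f₀ c₁ c₂ c₃ p x = 1 := by
  obtain ⟨-, h₂₃⟩ := lt_and_lt_of_geometric hc₁ hp hc₂ hc₃
  obtain ⟨n, hn⟩ := pow_unbounded_of_one_lt (c₁ / x) hp
  rw [div_lt_iff₀ hx₀] at hn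
  induction n generalizing x with
  | zero => exact Fc_eq_one_of_mem_Ioc h0 hsym hc₁ hp hc₂ hc₃ ⟨by simpa using hn, hx⟩
  | succ n ih =>
    rcases lt_or_ge c₁ x with hx₁ | hx₁
    · exact Fc_eq_one_of_mem_Ioc h0 hsym hc₁ hp hc₂ hc₃ ⟨hx₁, hx⟩
    · rw [Fc_eq_fc_add_Fc_mul h0 hc₁ h₂₃ hp, fc_of_le_left hx₁, zero_add]
      have hpx : p * x ≤ c₂ := hc₂ ▸ mul_le_mul_of_nonneg_left hx₁ (by linarith)
      exact ih (by positivity) hpx (by rwa [pow_succ, mul_assoc] at hn)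

end Geometric

theorem statement10 (f₀ : ℝ → ℝ)
    (h0 : ∀ x : ℝ, x ≤ 0 → f₀ x = 0) (h1 : ∀ x : ℝ, 1 ≤ x → f₀ x = 1)
    (hsym : ∀ x : ℝ, 0 < x → x < 1 → f₀ x + f₀ (1 - x) = 1)
    (c₁ c₂ c₃ p : ℝ) (hc₁ : 0 < c₁) (hp : 1 < p)
    (hc₂ : c₂ = p * c₁) (hc₃ : c₃ = p * c₂) :
    ∀ x : ℝ,
      Fc f₀ c₁ c₂ c₃ p x + Fc f₀ c₁ c₂ c₃ p (c₂ + c₃ - x) =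
        Set.indicator (Set.Ioo (0 : ℝ) (c₂ + c₃)) (fun _ => (1 : ℝ)) x := by
  have hf₀0 : f₀ 0 = 0 := h0 0 le_rfl
  have hsym' := add_apply_one_sub_eq_one_of_mem_Icc hf₀0 (h1 1 le_rfl) hsym
  obtain ⟨h₁₂, h₂₃⟩ := lt_and_lt_of_geometric hc₁ hp hc₂ hc₃
  intro x
  wlog hxy : x ≤ c₂ + c₃ - x generalizing x
  · have hmem : c₂ + c₃ - x ∈ Ioo 0 (c₂ + c₃) ↔ x ∈ Ioo 0 (c₂ + c₃) := by
      simp only [mem_Ioo]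
      constructor <;> rintro ⟨_, _⟩ <;> constructor <;> linarith
    have := this (c₂ + c₃ - x) (by linarith)
    rwa [sub_sub_cancel, add_comm, indicator_const_eq_indicator_const hmem] at this
  have hy : c₂ ≤ c₂ + c₃ - x := by linarith
  rw [Fc_eq_fc_of_le hf₀0 hc₁ hp hc₂ hc₃ hy]
  rcases le_or_gt x 0 with hx₀ | hx₀
  · rw [Fc_eq_zero_of_nonpos hc₁ (by linarith) hx₀, fc_of_ge_right hf₀0 h₂₃ (by linarith),
      indicator_of_notMem fun hx => hx₀.not_gt hx.1, add_zero]
  rw [indicator_of_mem (show x ∈ Ioo 0 (c₂ + c₃) from ⟨hx₀, by linarith⟩)]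
  rcases le_or_gt x c₂ with hx₂ | hx₂
  · rw [Fc_eq_one_of_pos_of_le hf₀0 hsym' hc₁ hp hc₂ hc₃ hx₀ hx₂,
      fc_of_ge_right hf₀0 h₂₃ (by linarith), add_zero]
  · rw [Fc_eq_fc_of_le hf₀0 hc₁ hp hc₂ hc₃ hx₂.le]
    exact fc_add_fc_reflect hsym' h₁₂.le ⟨hx₂, by linarith⟩
end
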